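/- Let G_u be the disjoint union of graphs G_v and G_w, let I be an independent set of G_u, and let ℓ ≤ |I|. If (x, y) is the unique maximum ℓ-stable tuple, then RIS_ℓ(G_u, I) = RIS_x(G_v, I ∩ V(G_v)) + RIS_y(G_w, I ∩ V(G_w)). -/

import Mathlib

open Finset

variable {V : Type*}

/-- `I` is an independent set of `G`. -/
def IsIndep (G : SimpleGraph V) (I : Finset V) : Prop :=
  ∀ u ∈ I, ∀ v ∈ I, ¬ G.Adj u v

/-- One token addition or removal between independent sets of size at least `k`. -/
def TarStep [DecidableEq V] (G : SimpleGraph V) (k : ℕ) (I J : Finset V) : Prop :=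
  IsIndep G I ∧ IsIndep G J ∧ k ≤ I.card ∧ k ≤ J.card ∧
    ∃ v : V, J = insert v I ∨ I = insert v J

/-- TAR-reachability with token lower bound `k`. -/
def TarReach [DecidableEq V] (G : SimpleGraph V) (k : ℕ) (I J : Finset V) : Prop :=
  Relation.ReflTransGen (TarStep G k) I J

/-- TAR-reachability inside the subgraph of `G` induced by `S`. -/
def TarReachOn [DecidableEq V] (G : SimpleGraph V) (S : Finset V) (k : ℕ)
    (I J : Finset V) : Prop :=
  Relation.ReflTransGen (fun I J => I ⊆ S ∧ J ⊆ S ∧ TarStep G k I J) I J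

/-- The maximum size of an independent set of `G` that is TAR_k-reachable from `I`. -/
noncomputable def RIS [DecidableEq V] (G : SimpleGraph V) (k : ℕ) (I : Finset V) : ℕ :=
  sSup {m | ∃ J : Finset V, TarReach G k I J ∧ J.card = m}

/-- The maximum size of an independent set TAR_k-reachable from `I` inside the
subgraph of `G` induced by `S`. -/
noncomputable def RISOn [DecidableEq V] (G : SimpleGraph V) (S : Finset V) (k : ℕ)
    (I : Finset V) : ℕ :=
  sSup {m | ∃ J : Finset V, TarReachOn G S k I J ∧ J.card = m}

/-- `(x, y)` is an `ℓ`-stable tuple for the independent set `I` of the disjoint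
union of the subgraphs induced by `S` and `Sᶜ`. -/
def StableTuple [Fintype V] [DecidableEq V] (G : SimpleGraph V) (S : Finset V)
    (I : Finset V) (ℓ x y : ℕ) : Prop :=
  x ≤ (I ∩ S).card ∧ y ≤ (I ∩ Sᶜ).card ∧
  x = max 0 (ℓ - RISOn G Sᶜ y (I ∩ Sᶜ)) ∧ y = max 0 (ℓ - RISOn G S x (I ∩ S))

/-!
Projecting a TAR_ℓ sequence of the union onto the two sides gives a TAR_x sequence and a TAR_y
sequence as soon as `x ≤ ℓ - RIS_y(G_w)` and `y ≤ ℓ - RIS_x(G_v)`: at each step only one side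
moves, and the other side holds at most its `RIS` value, so the moving side keeps enough tokens.
This gives `≤`. For `≥`, iterate `(a, b) ↦ (ℓ - RIS_b(G_w), ℓ - RIS_a(G_v))` from
`(|I ∩ V(G_v)|, |I ∩ V(G_w)|)`: the iterates decrease to the greatest stable tuple, i.e. to
`(x, y)`, and the maximum reachable sets of both sides stay reachable together along the way,
by moving one side at a time while the other one is held at its previous maximum.
-/

theorem Monotone.exists_iterate_isGreatest_fixedPt {α : Type*} [PartialOrder α]
    [WellFoundedLT α] {f : α → α} (hf : Monotone f) {a : α} (ha : f a ≤ a) :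
    ∃ n, IsGreatest {b | b ≤ a ∧ Function.IsFixedPt f b} (f^[n] a) := by
  have hanti := hf.antitone_iterate_of_map_le ha
  obtain ⟨n, hn⟩ := WellFoundedLT.antitone_chain_condition hanti
  refine ⟨n, ⟨hanti n.zero_le, ?_⟩, fun b ⟨hba, hb⟩ => ?_⟩
  · show f (f^[n] a) = f^[n] a
    rw [← Function.iterate_succ_apply' f n a]
    exact (hn (n + 1) n.le_succ).symm
  · calc b = f^[n] b := (hb.iterate n).symm
      _ ≤ f^[n] a := hf.iterate n hba

theorem Finset.card_inter_add_card_inter_compl {α : Type*} [Fintype α] [DecidableEq α]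
    (s t : Finset α) : (s ∩ t).card + (s ∩ tᶜ).card = s.card := by
  rw [← sdiff_eq_inter_compl]
  exact card_inter_add_card_sdiff s t

theorem IsIndep.mono {G : SimpleGraph V} {I J : Finset V} (h : IsIndep G I) (hJ : J ⊆ I) :
    IsIndep G J :=
  fun u hu v hv => h u (hJ hu) v (hJ hv)

section Reconfiguration

variable [DecidableEq V] {G : SimpleGraph V} {S I J A A' B : Finset V} {k ℓ : ℕ}

theorem IsIndep.union (hA : IsIndep G A) (hB : IsIndep G B)
    (hAB : ∀ a ∈ A, ∀ b ∈ B, ¬ G.Adj a b) : IsIndep G (A ∪ B) := by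
  intro u hu v hv
  rcases mem_union.1 hu with hu | hu <;> rcases mem_union.1 hv with hv | hv
  · exact hA u hu v hv
  · exact hAB u hu v hv
  · exact fun huv => hAB v hv u hu huv.symm
  · exact hB u hu v hv

theorem TarStep.symm (h : TarStep G k I J) : TarStep G k J I := by
  obtain ⟨hI, hJ, hkI, hkJ, v, hv⟩ := h
  exact ⟨hJ, hI, hkJ, hkI, v, hv.symm⟩

theorem TarStep.mono {k' : ℕ} (hk : k' ≤ k) (h : TarStep G k I J) : TarStep G k' I J :=
  ⟨h.1, h.2.1, hk.trans h.2.2.1, hk.trans h.2.2.2.1, h.2.2.2.2⟩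

theorem TarStep.tarReachOn_inter (h : TarStep G ℓ I J) (T : Finset V)
    (hI : k ≤ (I ∩ T).card) (hJ : k ≤ (J ∩ T).card) : TarReachOn G T k (I ∩ T) (J ∩ T) := by
  obtain ⟨hIi, hJi, -, -, v, hv⟩ := h
  by_cases hvT : v ∈ T
  · refine .single ⟨inter_subset_right, inter_subset_right, hIi.mono inter_subset_left,
      hJi.mono inter_subset_left, hI, hJ, v, ?_⟩
    rcases hv with rfl | rfl <;> simp [insert_inter_of_mem hvT]
  · have hIJ : J ∩ T = I ∩ T := by
      rcases hv with rfl | rfl <;> simp [insert_inter_of_notMem hvT]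
    rw [hIJ]
    exact .refl

theorem TarStep.inter_eq_or_inter_compl_eq [Fintype V] (h : TarStep G k I J) (S : Finset V) :
    J ∩ S = I ∩ S ∨ J ∩ Sᶜ = I ∩ Sᶜ := by
  obtain ⟨-, -, -, -, v, hv⟩ := h
  by_cases hvS : v ∈ S
  · have hvSc : v ∉ Sᶜ := by simpa using hvS
    right
    rcases hv with rfl | rfl <;> simp [insert_inter_of_notMem hvSc]
  · left
    rcases hv with rfl | rfl <;> simp [insert_inter_of_notMem hvS]

theorem TarReachOn.symm (h : TarReachOn G S k I J) : TarReachOn G S k J I := by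
  induction h with
  | refl => exact .refl
  | tail _ hstep ih => exact .head ⟨hstep.2.1, hstep.1, hstep.2.2.symm⟩ ih

theorem TarReachOn.trans {K : Finset V} (hIJ : TarReachOn G S k I J)
    (hJK : TarReachOn G S k J K) : TarReachOn G S k I K :=
  Relation.ReflTransGen.trans hIJ hJK

theorem TarReachOn.mono {k' : ℕ} (hk : k' ≤ k) (h : TarReachOn G S k I J) :
    TarReachOn G S k' I J :=
  Relation.ReflTransGen.mono (fun _ _ hIJ => ⟨hIJ.1, hIJ.2.1, hIJ.2.2.mono hk⟩) _ _ h

theorem TarReachOn.isIndep (h : TarReachOn G S k I J) (hI : IsIndep G I) : IsIndep G J := by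
  induction h with
  | refl => exact hI
  | tail _ hstep _ => exact hstep.2.2.2.1

theorem TarReachOn.subset (h : TarReachOn G S k I J) (hI : I ⊆ S) : J ⊆ S := by
  induction h with
  | refl => exact hI
  | tail _ hstep _ => exact hstep.2.1

theorem TarReachOn.tarReach_union (h : TarReachOn G S k A A') (hB : IsIndep G B)
    (hSB : Disjoint S B) (hadj : ∀ a ∈ S, ∀ b ∈ B, ¬ G.Adj a b) (hk : ℓ ≤ k + B.card) :
    TarReach G ℓ (A ∪ B) (A' ∪ B) := by
  have lift : ∀ {C : Finset V}, C ⊆ S → IsIndep G C → k ≤ C.card →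
      IsIndep G (C ∪ B) ∧ ℓ ≤ (C ∪ B).card := fun hCS hC hkC =>
    ⟨hC.union hB fun a ha b hb => hadj a (hCS ha) b hb,
      by rw [card_union_of_disjoint (hSB.mono_left hCS)]; omega⟩
  induction h with
  | refl => exact .refl
  | tail _ hstep ih =>
    obtain ⟨hCS, hDS, hC, hD, hkC, hkD, v, hv⟩ := hstep
    refine ih.tail ⟨(lift hCS hC hkC).1, (lift hDS hD hkD).1, (lift hCS hC hkC).2,
      (lift hDS hD hkD).2, v, ?_⟩
    rcases hv with rfl | rfl <;> simp [insert_union]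

end Reconfiguration

theorem bddAbove_card_setOf [Fintype V] (P : Finset V → Prop) :
    BddAbove {m | ∃ J : Finset V, P J ∧ J.card = m} :=
  ⟨Fintype.card V, by rintro m ⟨J, -, rfl⟩; exact card_le_univ J⟩

theorem RIS_le [DecidableEq V] {G : SimpleGraph V} {k n : ℕ} {I : Finset V}
    (h : ∀ J, TarReach G k I J → J.card ≤ n) : RIS G k I ≤ n :=
  csSup_le ⟨I.card, I, .refl, rfl⟩ fun _ ⟨J, hJ, hm⟩ => hm ▸ h J hJ

section ReachableSizes

variable [Fintype V] [DecidableEq V] {G : SimpleGraph V} {S I J : Finset V} {k ℓ x y : ℕ}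

theorem TarReach.card_le_RIS (h : TarReach G k I J) : J.card ≤ RIS G k I :=
  le_csSup (bddAbove_card_setOf _) ⟨J, h, rfl⟩

theorem TarReachOn.card_le_RISOn (h : TarReachOn G S k I J) : J.card ≤ RISOn G S k I :=
  le_csSup (bddAbove_card_setOf _) ⟨J, h, rfl⟩

theorem card_le_RISOn : I.card ≤ RISOn G S k I :=
  TarReachOn.card_le_RISOn .refl

theorem exists_tarReachOn_card_eq_RISOn (G : SimpleGraph V) (S : Finset V) (k : ℕ)
    (I : Finset V) : ∃ J, TarReachOn G S k I J ∧ J.card = RISOn G S k I :=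
  Nat.sSup_mem (s := {m | ∃ J, TarReachOn G S k I J ∧ J.card = m}) ⟨I.card, I, .refl, rfl⟩
    (bddAbove_card_setOf _)

theorem RISOn_anti {k' : ℕ} (hk : k ≤ k') : RISOn G S k' I ≤ RISOn G S k I := by
  obtain ⟨J, hJ, hJc⟩ := exists_tarReachOn_card_eq_RISOn G S k' I
  exact hJc ▸ (hJ.mono hk).card_le_RISOn

theorem TarReach.tarReachOn_inter_and_inter_compl (hx : x ≤ ℓ - RISOn G Sᶜ y (I ∩ Sᶜ))
    (hy : y ≤ ℓ - RISOn G S x (I ∩ S)) (h : TarReach G ℓ I J) :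
    TarReachOn G S x (I ∩ S) (J ∩ S) ∧ TarReachOn G Sᶜ y (I ∩ Sᶜ) (J ∩ Sᶜ) := by
  induction h with
  | refl => exact ⟨.refl, .refl⟩
  | @tail J K _ hstep ih =>
    have hJ := card_inter_add_card_inter_compl J S
    have hK := card_inter_add_card_inter_compl K S
    have hℓJ := hstep.2.2.1
    have hℓK := hstep.2.2.2.1
    rcases hstep.inter_eq_or_inter_compl_eq S with hS | hSc
    · have hJS := ih.1.card_le_RISOn
      have hKS := congrArg card hS
      exact ⟨hS ▸ ih.1, ih.2.trans (hstep.tarReachOn_inter _ (by omega) (by omega))⟩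
    · have hJSc := ih.2.card_le_RISOn
      have hKSc := congrArg card hSc
      exact ⟨ih.1.trans (hstep.tarReachOn_inter _ (by omega) (by omega)), hSc ▸ ih.2⟩

theorem RIS_le_RISOn_add_RISOn (hx : x ≤ ℓ - RISOn G Sᶜ y (I ∩ Sᶜ))
    (hy : y ≤ ℓ - RISOn G S x (I ∩ S)) :
    RIS G ℓ I ≤ RISOn G S x (I ∩ S) + RISOn G Sᶜ y (I ∩ Sᶜ) :=
  RIS_le fun J hJ => by
    obtain ⟨hS, hSc⟩ := hJ.tarReachOn_inter_and_inter_compl hx hy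
    rw [← card_inter_add_card_inter_compl J S]
    exact add_le_add hS.card_le_RISOn hSc.card_le_RISOn

end ReachableSizes

section StableTuples

variable [Fintype V] [DecidableEq V] {G : SimpleGraph V} {S I A₀ B₀ : Finset V} {ℓ : ℕ}

noncomputable def stableUpdate (G : SimpleGraph V) (S I : Finset V) (ℓ : ℕ) (p : ℕ × ℕ) :
    ℕ × ℕ :=
  (ℓ - RISOn G Sᶜ p.2 (I ∩ Sᶜ), ℓ - RISOn G S p.1 (I ∩ S))

theorem stableUpdate_monotone : Monotone (stableUpdate G S I ℓ) := fun _ _ hpq =>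
  ⟨Nat.sub_le_sub_left (RISOn_anti hpq.2) ℓ, Nat.sub_le_sub_left (RISOn_anti hpq.1) ℓ⟩

theorem stableUpdate_card_le_card (hℓ : ℓ ≤ I.card) :
    stableUpdate G S I ℓ ((I ∩ S).card, (I ∩ Sᶜ).card) ≤ ((I ∩ S).card, (I ∩ Sᶜ).card) := by
  have hI := card_inter_add_card_inter_compl I S
  have hS : (I ∩ S).card ≤ RISOn G S (I ∩ S).card (I ∩ S) := card_le_RISOn
  have hSc : (I ∩ Sᶜ).card ≤ RISOn G Sᶜ (I ∩ Sᶜ).card (I ∩ Sᶜ) := card_le_RISOn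
  exact ⟨by simp only [stableUpdate]; omega, by simp only [stableUpdate]; omega⟩

theorem stableTuple_iff {x y : ℕ} : StableTuple G S I ℓ x y ↔
    (x, y) ≤ ((I ∩ S).card, (I ∩ Sᶜ).card) ∧ Function.IsFixedPt (stableUpdate G S I ℓ) (x, y) := by
  simp only [StableTuple, Function.IsFixedPt, stableUpdate, Prod.mk_le_mk, Prod.ext_iff,
    Nat.zero_max]
  tauto

def JointlyReachable (G : SimpleGraph V) (S I : Finset V) (ℓ : ℕ) (p : ℕ × ℕ) : Prop :=
  ∃ A B, TarReachOn G S p.1 (I ∩ S) A ∧ TarReachOn G Sᶜ p.2 (I ∩ Sᶜ) B ∧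
    A.card = RISOn G S p.1 (I ∩ S) ∧ B.card = RISOn G Sᶜ p.2 (I ∩ Sᶜ) ∧ TarReach G ℓ I (A ∪ B)

theorem JointlyReachable.RISOn_add_RISOn_le_RIS {p : ℕ × ℕ} (h : JointlyReachable G S I ℓ p) :
    RISOn G S p.1 (I ∩ S) + RISOn G Sᶜ p.2 (I ∩ Sᶜ) ≤ RIS G ℓ I := by
  obtain ⟨A, B, hA, hB, hAc, hBc, hreach⟩ := h
  have hdisj : Disjoint A B :=
    disjoint_of_subset_left (hA.subset inter_subset_right)
      (disjoint_of_subset_right (hB.subset inter_subset_right) disjoint_compl_right)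
  rw [← hAc, ← hBc, ← card_union_of_disjoint hdisj]
  exact hreach.card_le_RIS

theorem jointlyReachable_of_tarReach (hsep : ∀ a ∈ S, ∀ b ∉ S, ¬ G.Adj a b)
    (hI : IsIndep G I) {p : ℕ × ℕ} (hA₀ : TarReachOn G S p.1 (I ∩ S) A₀)
    (hB₀ : TarReachOn G Sᶜ p.2 (I ∩ Sᶜ) B₀) (hreach : TarReach G ℓ I (A₀ ∪ B₀))
    (hℓA : ℓ ≤ p.1 + B₀.card) (hℓB : ℓ ≤ p.2 + RISOn G S p.1 (I ∩ S)) :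
    JointlyReachable G S I ℓ p := by
  obtain ⟨A, hA, hAc⟩ := exists_tarReachOn_card_eq_RISOn G S p.1 (I ∩ S)
  obtain ⟨B, hB, hBc⟩ := exists_tarReachOn_card_eq_RISOn G Sᶜ p.2 (I ∩ Sᶜ)
  have hAS : A ⊆ S := hA.subset inter_subset_right
  have hB₀S : B₀ ⊆ Sᶜ := hB₀.subset inter_subset_right
  have moveA : TarReach G ℓ (A₀ ∪ B₀) (A ∪ B₀) :=
    (hA₀.symm.trans hA).tarReach_union (hB₀.isIndep (hI.mono inter_subset_left))
      (disjoint_of_subset_right hB₀S disjoint_compl_right)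
      (fun a ha b hb => hsep a ha b (mem_compl.1 (hB₀S hb))) hℓA
  have moveB : TarReach G ℓ (B₀ ∪ A) (B ∪ A) :=
    (hB₀.symm.trans hB).tarReach_union (hA.isIndep (hI.mono inter_subset_left))
      (disjoint_of_subset_right hAS disjoint_compl_left)
      (fun a ha b hb hab => hsep b (hAS hb) a (mem_compl.1 ha) hab.symm) (by omega)
  rw [union_comm B₀ A, union_comm B A] at moveB
  exact ⟨A, B, hA, hB, hAc, hBc, hreach.trans (moveA.trans moveB)⟩

theorem jointlyReachable_init (hsep : ∀ a ∈ S, ∀ b ∉ S, ¬ G.Adj a b) (hI : IsIndep G I)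
    (hℓ : ℓ ≤ I.card) : JointlyReachable G S I ℓ ((I ∩ S).card, (I ∩ Sᶜ).card) := by
  have hIcard := card_inter_add_card_inter_compl I S
  have hS : (I ∩ S).card ≤ RISOn G S (I ∩ S).card (I ∩ S) := card_le_RISOn
  refine jointlyReachable_of_tarReach hsep hI .refl .refl ?_ (by dsimp only; omega)
    (by dsimp only; omega)
  rw [← inter_union_distrib_left, union_compl, inter_univ]
  exact .refl

theorem JointlyReachable.map_stableUpdate (hsep : ∀ a ∈ S, ∀ b ∉ S, ¬ G.Adj a b)
    (hI : IsIndep G I) {p : ℕ × ℕ} (h : JointlyReachable G S I ℓ p)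
    (hle : stableUpdate G S I ℓ p ≤ p) : JointlyReachable G S I ℓ (stableUpdate G S I ℓ p) := by
  obtain ⟨A₀, B₀, hA₀, hB₀, -, hB₀c, hreach⟩ := h
  have hmono : RISOn G S p.1 (I ∩ S) ≤ RISOn G S (stableUpdate G S I ℓ p).1 (I ∩ S) :=
    RISOn_anti hle.1
  refine jointlyReachable_of_tarReach hsep hI (hA₀.mono hle.1) (hB₀.mono hle.2) hreach ?_ ?_
  · simp only [stableUpdate]; omega
  · simp only [stableUpdate] at hmono ⊢; omega

theorem jointlyReachable_iterate_stableUpdate (hsep : ∀ a ∈ S, ∀ b ∉ S, ¬ G.Adj a b)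
    (hI : IsIndep G I) (hℓ : ℓ ≤ I.card) (n : ℕ) :
    JointlyReachable G S I ℓ ((stableUpdate G S I ℓ)^[n] ((I ∩ S).card, (I ∩ Sᶜ).card)) := by
  induction n with
  | zero => exact jointlyReachable_init hsep hI hℓ
  | succ n ih =>
    have hle : (stableUpdate G S I ℓ)^[n + 1] ((I ∩ S).card, (I ∩ Sᶜ).card) ≤
        (stableUpdate G S I ℓ)^[n] ((I ∩ S).card, (I ∩ Sᶜ).card) :=
      stableUpdate_monotone.antitone_iterate_of_map_le (stableUpdate_card_le_card hℓ) n.le_succ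
    rw [Function.iterate_succ_apply'] at hle ⊢
    exact ih.map_stableUpdate hsep hI hle

end StableTuples

/-- For a disjoint union, `RIS` at the union node is determined by the maximum
`ℓ`-stable tuple `(x, y)`. -/
theorem ris_union [Fintype V] [DecidableEq V] (G : SimpleGraph V)
    (S : Finset V) (hsep : ∀ a ∈ S, ∀ b ∉ S, ¬ G.Adj a b)
    (I : Finset V) (hI : IsIndep G I) (ℓ : ℕ) (hℓ : ℓ ≤ I.card) (x y : ℕ)
    (hstable : StableTuple G S I ℓ x y)
    (hmax : ∀ x' y' : ℕ, StableTuple G S I ℓ x' y' → x' ≤ x ∧ y' ≤ y) :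
    RIS G ℓ I = RISOn G S x (I ∩ S) + RISOn G Sᶜ y (I ∩ Sᶜ) := by
  obtain ⟨hxy, hfix⟩ := stableTuple_iff.1 hstable
  refine le_antisymm (RIS_le_RISOn_add_RISOn (congrArg Prod.fst hfix).ge
    (congrArg Prod.snd hfix).ge) ?_
  obtain ⟨n, ⟨hp, hpfix⟩, hgreatest⟩ :=
    stableUpdate_monotone.exists_iterate_isGreatest_fixedPt (stableUpdate_card_le_card (G := G) hℓ)
  have hxy_eq : (stableUpdate G S I ℓ)^[n] ((I ∩ S).card, (I ∩ Sᶜ).card) = (x, y) :=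
    le_antisymm (hmax _ _ (stableTuple_iff.2 ⟨hp, hpfix⟩)) (hgreatest ⟨hxy, hfix⟩)
  have hreach := jointlyReachable_iterate_stableUpdate hsep hI hℓ n
  rw [hxy_eq] at hreach
  exact hreach.RISOn_add_RISOn_le_RIS
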